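/- arXiv:2112.03440 — 2 statements merged into one kernel-verified Lean document; each statement's English description precedes it below -/
import Mathlib

section
/- Multivariate Bregman identity: for a differentiable convex function f : ℝ^{k-1} → ℝ and its associated function f*(u) = (1 + Σ_i u_i) f(u/(1 + Σ_i u_i)), for any u, v ∈ ℝ^{k-1} with 1 + Σ_i u_i > 0 and 1 + Σ_i v_i > 0, the Bregman divergences satisfy B_f(u/(1+Σ_i u_i), v/(1+Σ_i v_i)) = (1/(1+Σ_i u_i)) · B_{f*}(u, v). -/
/-!
The derivative of the perspective `f*(w) = (1 + ℓ w) f(w̃)`, `w̃ = (1 + ℓ w)⁻¹ • w`, at `v` in the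
direction `h` is `ℓ h · f(ṽ) + ∇f(ṽ)(h - ℓ h • ṽ)`. For `h = u - v` the inner vector equals
`(1 + ℓ u) • (ũ - ṽ)`, so every term of `B_{f*}(u, v)` carries the factor `1 + ℓ u`, and what
remains is `B_f(ũ, ṽ)`. Only linearity of `ℓ w = ∑ i, w i` matters.
-/

open ContinuousLinearMap

variable {E : Type*} [NormedAddCommGroup E] [NormedSpace ℝ E]

noncomputable def bregmanDiv (φ : E → ℝ) (x y : E) : ℝ :=
  φ x - φ y - fderiv ℝ φ y (x - y)

/-- The perspective `(w, t) ↦ t f(w / t)` of `f` on the affine chart `t = 1 + ℓ w`. -/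
noncomputable def perspective (ℓ : E →L[ℝ] ℝ) (f : E → ℝ) (w : E) : ℝ :=
  (1 + ℓ w) * f ((1 + ℓ w)⁻¹ • w)

section Perspective

variable (ℓ : E →L[ℝ] ℝ) {v : E}

theorem hasFDerivAt_inv_one_add_smul_self (hv : 1 + ℓ v ≠ 0) :
    HasFDerivAt (fun w => (1 + ℓ w)⁻¹ • w)
      ((1 + ℓ v)⁻¹ • (ContinuousLinearMap.id ℝ E - ℓ.smulRight ((1 + ℓ v)⁻¹ • v))) v := by
  have hinv : HasFDerivAt (fun w => (1 + ℓ w)⁻¹) _ v :=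
    (hasFDerivAt_inv hv).comp v (ℓ.hasFDerivAt.const_add 1)
  refine (hinv.smul (hasFDerivAt_id v)).congr_fderiv ?_
  ext h
  simp only [id_eq, add_apply, smul_apply, id_apply, smulRight_apply, comp_apply,
    toSpanSingleton_apply, smul_eq_mul, mul_neg, neg_smul, sub_apply]
  match_scalars <;> field_simp

theorem hasFDerivAt_perspective {f : E → ℝ} (hv : 1 + ℓ v ≠ 0)
    (hf : DifferentiableAt ℝ f ((1 + ℓ v)⁻¹ • v)) :
    HasFDerivAt (perspective ℓ f)
      (f ((1 + ℓ v)⁻¹ • v) • ℓ +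
        (fderiv ℝ f ((1 + ℓ v)⁻¹ • v)).comp
          (ContinuousLinearMap.id ℝ E - ℓ.smulRight ((1 + ℓ v)⁻¹ • v))) v := by
  have hcomp : HasFDerivAt (fun w => f ((1 + ℓ w)⁻¹ • w)) _ v :=
    HasFDerivAt.comp (f := fun w => (1 + ℓ w)⁻¹ • w) v hf.hasFDerivAt
      (hasFDerivAt_inv_one_add_smul_self ℓ hv)
  refine ((ℓ.hasFDerivAt.const_add 1).mul hcomp).congr_fderiv ?_
  ext h
  simp [hv]
  ring

theorem bregmanDiv_perspective {f : E → ℝ} {u : E} (hu : 1 + ℓ u ≠ 0) (hv : 1 + ℓ v ≠ 0)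
    (hf : DifferentiableAt ℝ f ((1 + ℓ v)⁻¹ • v)) :
    bregmanDiv (perspective ℓ f) u v =
      (1 + ℓ u) * bregmanDiv f ((1 + ℓ u)⁻¹ • u) ((1 + ℓ v)⁻¹ • v) := by
  have hdir : u - v - ℓ (u - v) • (1 + ℓ v)⁻¹ • v =
      (1 + ℓ u) • ((1 + ℓ u)⁻¹ • u - (1 + ℓ v)⁻¹ • v) := by
    rw [map_sub]
    match_scalars
    · field_simp
    · field_simp
      ring
  rw [bregmanDiv, bregmanDiv, (hasFDerivAt_perspective ℓ hv hf).fderiv]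
  simp only [add_apply, FunLike.coe_smul, Pi.smul_apply, coe_comp, Function.comp_apply,
    FunLike.coe_sub, Pi.sub_apply, coe_id', id_eq, smulRight_apply, smul_eq_mul, hdir, map_smul]
  simp only [perspective, map_sub]
  field_simp
  ring

end Perspective

theorem stmt_2_general (n : ℕ) (f : (Fin n → ℝ) → ℝ)
    (hdiff : Differentiable ℝ f)
    (fstar : (Fin n → ℝ) → ℝ)
    (hfstar : ∀ u, fstar u = (1 + ∑ i, u i) * f ((1 + ∑ i, u i)⁻¹ • u))
    (B : ((Fin n → ℝ) → ℝ) → (Fin n → ℝ) → (Fin n → ℝ) → ℝ)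
    (hB : ∀ φ x y, B φ x y = φ x - φ y - fderiv ℝ φ y (x - y))
    (u v : Fin n → ℝ) (hu : 0 < 1 + ∑ i, u i) (hv : 0 < 1 + ∑ i, v i) :
    B f ((1 + ∑ i, u i)⁻¹ • u) ((1 + ∑ i, v i)⁻¹ • v)
      = (1 + ∑ i, u i)⁻¹ * B fstar u v := by
  set ℓ : (Fin n → ℝ) →L[ℝ] ℝ := ∑ i, proj i
  have hℓ (w : Fin n → ℝ) : ℓ w = ∑ i, w i := by simp [ℓ]
  have hfstar_eq : fstar = perspective ℓ f := funext fun w => by rw [hfstar, perspective, hℓ]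
  have key := bregmanDiv_perspective ℓ (f := f) (hℓ u ▸ hu.ne') (hℓ v ▸ hv.ne') (hdiff _)
  simp only [hℓ, ← hfstar_eq] at key
  rw [hB, hB, ← bregmanDiv, ← bregmanDiv, key, inv_mul_cancel_left₀ hu.ne']

/-- Multivariate Bregman identity:
`B_f(u/(1+Σu), v/(1+Σv)) = (1/(1+Σu)) · B_{f*}(u, v)` where
`f*(u) = (1+Σ_i u_i) f(u/(1+Σ_i u_i))`. -/
theorem stmt_2 (n : ℕ) (f : (Fin n → ℝ) → ℝ)
    (hf : ConvexOn ℝ Set.univ f) (hdiff : Differentiable ℝ f)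
    (fstar : (Fin n → ℝ) → ℝ)
    (hfstar : ∀ u, fstar u = (1 + ∑ i, u i) * f ((1 + ∑ i, u i)⁻¹ • u))
    (B : ((Fin n → ℝ) → ℝ) → (Fin n → ℝ) → (Fin n → ℝ) → ℝ)
    (hB : ∀ φ x y, B φ x y = φ x - φ y - fderiv ℝ φ y (x - y))
    (u v : Fin n → ℝ) (hu : 0 < 1 + ∑ i, u i) (hv : 0 < 1 + ∑ i, v i) :
    B f ((1 + ∑ i, u i)⁻¹ • u) ((1 + ∑ i, v i)⁻¹ • v)
      = (1 + ∑ i, u i)⁻¹ * B fstar u v :=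
  stmt_2_general n f hdiff fstar hfstar B hB u v hu hv
end

section
/- For f(r̂) = (1/2)Σ_{i=1}^{k-1}(r̂_i − 1)², the multi-distribution DRE loss E_{p_k}[⟨∇f(r̂), r̂⟩ − f(r̂)] − Σ_{i<k} E_{p_i}[∂_i f(r̂)] equals (1/2)Σ_{i<k} E_{p_k}[(r̂_i − r_i)²] − (1/2) E_{p_k}[‖r − 1‖²], where r_i = p_i/p_k. -/
open MeasureTheory

/-- For `f(r̂) = (1/2)Σ_i(r̂_i − 1)²`, the multi-distribution DRE loss
`E_{p_k}[⟨∇f(r̂), r̂⟩ − f(r̂)] − Σ_i E_{p_i}[∂_i f(r̂)]` equals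
`(1/2)Σ_i E_{p_k}[(r̂_i − r_i)²] − (1/2) E_{p_k}[‖r − 1‖²]` with `r_i = p_i/p_k`. -/
theorem stmt_10 {X : Type*} [MeasurableSpace X] (μ : Measure X) (n : ℕ)
    (p : Fin (n+1) → X → ℝ) (hp : ∀ i x, 0 < p i x)
    (hprob : ∀ i, ∫ x, p i x ∂μ = 1)
    (r rhat : Fin n → X → ℝ)
    (hr : ∀ i x, r i x = p i.castSucc x / p (Fin.last n) x)
    (hI1 : ∀ i, Integrable (fun x => p (Fin.last n) x * (rhat i x) ^ 2) μ)
    (hI2 : ∀ i, Integrable (fun x => p (Fin.last n) x * rhat i x) μ)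
    (hI3 : ∀ i, Integrable (fun x => p i.castSucc x * rhat i x) μ)
    (hI4 : ∀ i : Fin (n+1), Integrable (p i) μ)
    (hI5 : ∀ i, Integrable (fun x => p (Fin.last n) x * (r i x) ^ 2) μ) :
    (∫ x, p (Fin.last n) x *
        ((∑ i, (rhat i x - 1) * rhat i x) - (1/2) * ∑ i, (rhat i x - 1) ^ 2) ∂μ)
      - ∑ i, ∫ x, p i.castSucc x * (rhat i x - 1) ∂μ
    = (1/2) * ∑ i, (∫ x, p (Fin.last n) x * (rhat i x - r i x) ^ 2 ∂μ)
      - (1/2) * ∫ x, p (Fin.last n) x * (∑ i, (r i x - 1) ^ 2) ∂μ := by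
  set k := Fin.last n with hk
  have hpr : ∀ (i : Fin n) x, p k x * r i x = p i.castSucc x := by
    intro i x
    rw [hr i x]
    field_simp
    exact mul_div_cancel_left₀ _ (hp k x).ne'
  -- integrability of the LHS summands
  have hFeq : ∀ i : Fin n,
      (fun x => p k x * ((rhat i x - 1) * rhat i x - (1/2) * (rhat i x - 1) ^ 2))
        = fun x => (1/2) * (p k x * (rhat i x) ^ 2) - (1/2) * p k x := by
    intro i; funext x; ring
  have hF : ∀ i : Fin n, Integrable
      (fun x => p k x * ((rhat i x - 1) * rhat i x - (1/2) * (rhat i x - 1) ^ 2)) μ := by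
    intro i
    rw [hFeq i]
    exact ((hI1 i).const_mul _).sub ((hI4 k).const_mul _)
  have hGeq : ∀ i : Fin n,
      (fun x => p k x * (r i x - 1) ^ 2)
        = fun x => p k x * (r i x) ^ 2 - 2 * p i.castSucc x + p k x := by
    intro i; funext x
    rw [← hpr i x]; ring
  have hG : ∀ i : Fin n, Integrable (fun x => p k x * (r i x - 1) ^ 2) μ := by
    intro i
    rw [hGeq i]
    exact ((hI5 i).sub ((hI4 i.castSucc).const_mul 2)).add (hI4 k)
  -- split the big integrals into sums
  have hL : (∫ x, p k x *
        ((∑ i, (rhat i x - 1) * rhat i x) - (1/2) * ∑ i, (rhat i x - 1) ^ 2) ∂μ)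
      = ∑ i, ∫ x, p k x * ((rhat i x - 1) * rhat i x - (1/2) * (rhat i x - 1) ^ 2) ∂μ := by
    rw [← integral_finset_sum _ (fun i _ => hF i)]
    congr 1; funext x
    rw [← Finset.mul_sum, Finset.sum_sub_distrib, ← Finset.mul_sum]
  have hRr : (∫ x, p k x * (∑ i, (r i x - 1) ^ 2) ∂μ)
      = ∑ i, ∫ x, p k x * (r i x - 1) ^ 2 ∂μ := by
    rw [← integral_finset_sum _ (fun i _ => hG i)]
    congr 1; funext x; rw [Finset.mul_sum]
  rw [hL, hRr, Finset.mul_sum, Finset.mul_sum, ← Finset.sum_sub_distrib,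
    ← Finset.sum_sub_distrib]
  refine Finset.sum_congr rfl fun i _ => ?_
  -- compute the four integrals
  have hA : (∫ x, p k x * ((rhat i x - 1) * rhat i x - (1/2) * (rhat i x - 1) ^ 2) ∂μ)
      = (1/2) * (∫ x, p k x * (rhat i x) ^ 2 ∂μ) - (1/2) := by
    rw [hFeq i, integral_sub ((hI1 i).const_mul _) ((hI4 k).const_mul _),
      integral_const_mul, integral_const_mul, hprob k, mul_one]
  have hB : (∫ x, p i.castSucc x * (rhat i x - 1) ∂μ)
      = (∫ x, p i.castSucc x * rhat i x ∂μ) - 1 := by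
    have : (fun x => p i.castSucc x * (rhat i x - 1))
        = fun x => p i.castSucc x * rhat i x - p i.castSucc x := by
      funext x; ring
    rw [this, integral_sub (hI3 i) (hI4 i.castSucc), hprob i.castSucc]
  have hC : (∫ x, p k x * (rhat i x - r i x) ^ 2 ∂μ)
      = (∫ x, p k x * (rhat i x) ^ 2 ∂μ) - 2 * (∫ x, p i.castSucc x * rhat i x ∂μ)
        + (∫ x, p k x * (r i x) ^ 2 ∂μ) := by
    have : (fun x => p k x * (rhat i x - r i x) ^ 2)
        = fun x => p k x * (rhat i x) ^ 2 - 2 * (p i.castSucc x * rhat i x)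
            + p k x * (r i x) ^ 2 := by
      funext x
      rw [← hpr i x]; ring
    have h1 : Integrable
        (fun x => p k x * (rhat i x) ^ 2 - 2 * (p i.castSucc x * rhat i x)) μ :=
      (hI1 i).sub ((hI3 i).const_mul 2)
    rw [this, integral_add h1 (hI5 i),
      integral_sub (hI1 i) ((hI3 i).const_mul 2), integral_const_mul]
  have hD : (∫ x, p k x * (r i x - 1) ^ 2 ∂μ)
      = (∫ x, p k x * (r i x) ^ 2 ∂μ) - 1 := by
    have h1 : Integrable (fun x => p k x * (r i x) ^ 2 - 2 * p i.castSucc x) μ :=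
      (hI5 i).sub ((hI4 i.castSucc).const_mul 2)
    rw [hGeq i, integral_add h1 (hI4 k),
      integral_sub (hI5 i) ((hI4 i.castSucc).const_mul 2), integral_const_mul,
      hprob i.castSucc, hprob k]
    ring
  rw [hA, hB, hC, hD]
  ring
end
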